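/- arXiv:2401.10930 — 8 statements merged into one kernel-verified Lean document; each statement's English description precedes it below -/
import Mathlib

section
/- Let p ≥ 137 be a prime with p ≡ 5 (mod 8) such that p + x² has at most two distinct prime factors for every odd integer x with x² < p. Then for every odd positive integer x with x² < p, the number p + x² is twice a prime. -/
/-!
Since `p ≡ 5 (mod 8)` and `x² ≡ 1 (mod 8)`, `p + x² = 2m` with `m ≡ 3 (mod 4)`; as `2 ∣ p + x²`,
the bound `ω(p + x²) ≤ 2` makes `m = q ^ k` a prime power, and `m ≡ 3 (mod 4)` forces `k` odd.
If `k ≥ 3` then `q³ < p`. Let `y₁, y₂ < 2q` be the odd representatives of `x` and `-x` modulo `q`.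
Then `q ∣ p + yᵢ²` and `yᵢ² < p`, so again `p + yᵢ² = 2 q ^ j`, now with `j ≥ 3` because
`p > q³ > 2q²`. Hence `q³ ∣ y₁² - y₂²`; since `y₁ - y₂ ≡ 2x` is prime to `q`, `q³ ∣ y₁ + y₂ < 4q`,
which is absurd.
-/

theorem Nat.sq_mod_eight_eq_one_of_odd {y : ℕ} (hy : Odd y) : y ^ 2 % 8 = 1 := by
  have := Nat.odd_iff.mp hy
  rw [Nat.pow_mod]
  have := Nat.mod_lt y (by norm_num : 8 > 0)
  interval_cases h : y % 8 <;> omega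

theorem Nat.mod_four_eq_three_and_odd_of_pow_mod_four_eq_three {q k : ℕ} (h : q ^ k % 4 = 3) :
    q % 4 = 3 ∧ Odd k := by
  have hsq : q ^ 2 % 4 ≤ 1 := by
    obtain ⟨a, rfl | rfl⟩ := Nat.even_or_odd' q <;> ring_nf <;> omega
  have hsq_pow : ∀ t, (q ^ 2) ^ t % 4 ≤ 1 := by
    intro t
    rw [Nat.pow_mod]
    interval_cases q ^ 2 % 4 <;> rcases t with _ | t <;> simp
  obtain ⟨t, rfl | rfl⟩ := Nat.even_or_odd' k
  · have := hsq_pow t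
    rw [pow_mul] at h
    omega
  · refine ⟨?_, odd_two_mul_add_one t⟩
    rw [pow_succ, pow_mul, Nat.mul_mod] at h
    have := hsq_pow t
    interval_cases (q ^ 2) ^ t % 4 <;> omega

theorem Nat.isPrimePow_of_card_primeFactors_two_mul_le_two {m : ℕ} (hm : Odd m) (h1 : 1 < m)
    (h : (2 * m).primeFactors.card ≤ 2) : IsPrimePow m := by
  have hcop : Nat.Coprime 2 m := Nat.coprime_two_left.mpr hm
  rw [Nat.primeFactors_mul two_ne_zero (by omega),
    Finset.card_union_of_disjoint hcop.disjoint_primeFactors, Nat.prime_two.primeFactors,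
    Finset.card_singleton] at h
  have := (Nat.nonempty_primeFactors.mpr h1).card_pos
  exact isPrimePow_iff_card_primeFactors_eq_one.mpr (by omega)

theorem Nat.exists_eq_two_mul_prime_pow_of_mod_eight_eq_six {n : ℕ} (hn : n % 8 = 6)
    (h : n.primeFactors.card ≤ 2) :
    ∃ q k : ℕ, q.Prime ∧ q % 4 = 3 ∧ Odd k ∧ n = 2 * q ^ k := by
  obtain ⟨m, rfl⟩ : 2 ∣ n := by omega
  obtain ⟨q, k, hq, hk, rfl⟩ :=
    Nat.isPrimePow_of_card_primeFactors_two_mul_le_two (Nat.odd_iff.mpr (by omega)) (by omega) h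
  obtain ⟨hq4, hk⟩ :=
    Nat.mod_four_eq_three_and_odd_of_pow_mod_four_eq_three (by omega : q ^ k % 4 = 3)
  exact ⟨q, k, hq.nat_prime, hq4, hk, rfl⟩

theorem ZMod.exists_odd_lt_two_mul_natCast_eq {q : ℕ} (hq : Odd q) (a : ZMod q) :
    ∃ y : ℕ, Odd y ∧ y < 2 * q ∧ (y : ZMod q) = a := by
  have : NeZero q := ⟨hq.pos.ne'⟩
  have := a.val_lt
  obtain h | h := Nat.even_or_odd a.val
  · exact ⟨a.val + q, h.add_odd hq, by omega, by simp⟩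
  · exact ⟨a.val, h, by omega, by simp⟩

theorem Int.not_pow_dvd_sq_sub_sq {q a b : ℤ} (n : ℕ) (hq : Prime q) (hab : ¬ q ∣ a - b)
    (hpos : 0 < a + b) (hlt : a + b < q ^ n) : ¬ q ^ n ∣ a ^ 2 - b ^ 2 := by
  intro hdvd
  rw [sq_sub_sq, mul_comm] at hdvd
  have := ((hq.coprime_iff_not_dvd.mpr hab).pow_left (m := n)).dvd_of_dvd_mul_left hdvd
  exact absurd (Int.le_of_dvd hpos this) (not_le.mpr hlt)

theorem exists_add_sq_eq_two_mul_prime_pow {p y : ℕ} (hmod : p % 8 = 5)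
    (hω : ∀ x : ℕ, Odd x → x ^ 2 < p → (p + x ^ 2).primeFactors.card ≤ 2)
    (hy : Odd y) (hyp : y ^ 2 < p) :
    ∃ q k : ℕ, q.Prime ∧ q % 4 = 3 ∧ Odd k ∧ p + y ^ 2 = 2 * q ^ k :=
  Nat.exists_eq_two_mul_prime_pow_of_mod_eight_eq_six
    (by have := Nat.sq_mod_eight_eq_one_of_odd hy; omega) (hω y hy hyp)

theorem pow_three_dvd_add_sq_of_dvd {p q y : ℕ} (hmod : p % 8 = 5)
    (hω : ∀ x : ℕ, Odd x → x ^ 2 < p → (p + x ^ 2).primeFactors.card ≤ 2)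
    (hq : q.Prime) (hq2 : q ≠ 2) (hqp : q ^ 3 < p) (hy : Odd y) (hyp : y ^ 2 < p)
    (hdvd : q ∣ p + y ^ 2) : q ^ 3 ∣ p + y ^ 2 := by
  obtain ⟨r, j, hr, -, -, hpy⟩ := exists_add_sq_eq_two_mul_prime_pow hmod hω hy hyp
  rw [hpy] at hdvd ⊢
  obtain rfl : q = r := by
    rcases hq.dvd_mul.mp hdvd with h | h
    · exact absurd ((Nat.prime_dvd_prime_iff_eq hq Nat.prime_two).mp h) hq2
    · exact (Nat.prime_dvd_prime_iff_eq hq hr).mp (hq.dvd_of_dvd_pow h)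
  have hq3 : 3 ≤ q := by have := hq.two_le; omega
  have hj : q ^ 2 < q ^ j := by
    have : 3 * q ^ 2 ≤ q ^ 3 := by rw [pow_succ' q 2]; exact Nat.mul_le_mul_right _ hq3
    omega
  exact Dvd.dvd.mul_left (pow_dvd_pow q ((Nat.pow_lt_pow_iff_right (by omega)).mp hj)) 2

theorem not_dvd_add_sq_of_not_dvd {p q x : ℕ} (hmod : p % 8 = 5)
    (hω : ∀ x : ℕ, Odd x → x ^ 2 < p → (p + x ^ 2).primeFactors.card ≤ 2)
    (hq : q.Prime) (hq2 : q ≠ 2) (hqp : q ^ 3 < p) (h4q : 4 * q ^ 2 ≤ p) (hqx : ¬ q ∣ x) :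
    ¬ q ∣ p + x ^ 2 := by
  intro hqpx
  have : Fact q.Prime := ⟨hq⟩
  have hq_odd : Odd q := hq.odd_of_ne_two hq2
  have hcube : ∀ y : ℕ, Odd y → y < 2 * q → (y : ZMod q) ^ 2 = x ^ 2 →
      ((q ^ 3 : ℕ) : ℤ) ∣ ((p + y ^ 2 : ℕ) : ℤ) := by
    intro y hy hyq hyx
    refine Int.natCast_dvd_natCast.mpr
      (pow_three_dvd_add_sq_of_dvd hmod hω hq hq2 hqp hy (by nlinarith) ?_)
    rw [← ZMod.natCast_eq_zero_iff] at hqpx ⊢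
    push_cast at hqpx ⊢
    rwa [hyx]
  obtain ⟨a, ha, haq, hax⟩ := ZMod.exists_odd_lt_two_mul_natCast_eq hq_odd (x : ZMod q)
  obtain ⟨b, hb, hbq, hbx⟩ := ZMod.exists_odd_lt_two_mul_natCast_eq hq_odd (-x : ZMod q)
  refine Int.not_pow_dvd_sq_sub_sq 3 (Nat.prime_iff_prime_int.mp hq) ?_ ?_ ?_
    (by simpa using dvd_sub (hcube a ha haq (by rw [hax])) (hcube b hb hbq (by rw [hbx]; ring)))
  · have h2 : (2 : ZMod q) ≠ 0 := by
      rw [← Nat.cast_ofNat, Ne, ZMod.natCast_eq_zero_iff]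
      exact fun h => hq2 ((Nat.prime_dvd_prime_iff_eq hq Nat.prime_two).mp h)
    rw [← ZMod.intCast_zmod_eq_zero_iff_dvd]
    push_cast
    rw [hax, hbx, sub_neg_eq_add, ← two_mul]
    exact mul_ne_zero h2 (by rwa [Ne, ZMod.natCast_eq_zero_iff])
  · have := ha.pos
    omega
  · have : 4 * q ≤ q ^ 3 := by nlinarith [hq.two_le]
    exact_mod_cast (by omega : a + b < q ^ 3)

theorem stmt_0 (p : ℕ) (hp : p.Prime) (h137 : 137 ≤ p) (hmod : p % 8 = 5)
    (hω : ∀ x : ℕ, Odd x → x ^ 2 < p → (p + x ^ 2).primeFactors.card ≤ 2) :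
    ∀ x : ℕ, Odd x → 0 < x → x ^ 2 < p → ∃ q : ℕ, q.Prime ∧ p + x ^ 2 = 2 * q := by
  intro x hx _ hxp
  obtain ⟨q, k, hq, hq4, ⟨t, rfl⟩, hpx⟩ := exists_add_sq_eq_two_mul_prime_pow hmod hω hx hxp
  rcases Nat.eq_zero_or_pos t with rfl | ht
  · exact ⟨q, hq, by simpa using hpx⟩
  have hqp : q ^ 3 < p :=
    calc q ^ 3 ≤ q ^ (2 * t + 1) := Nat.pow_le_pow_right hq.pos (by omega)
      _ < p := by omega
  have h4q : 4 * q ^ 2 ≤ p := by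
    rcases (show q = 3 ∨ 4 ≤ q by omega) with rfl | hq4
    · omega
    · have : 4 * q ^ 2 ≤ q ^ 3 := by rw [pow_succ' q 2]; exact Nat.mul_le_mul_right _ hq4
      omega
  have hqpx : q ∣ p + x ^ 2 := hpx ▸ Dvd.dvd.mul_left (dvd_pow_self q (by omega)) 2
  refine absurd hqpx (not_dvd_add_sq_of_not_dvd hmod hω hq (by omega) hqp h4q fun hqx => ?_)
  have hqp' : q ∣ p := (Nat.dvd_add_left (dvd_pow hqx two_ne_zero)).mp hqpx
  have : q < q ^ 3 := lt_self_pow₀ hq.one_lt (by norm_num)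
  have := (Nat.prime_dvd_prime_iff_eq hq hp).mp hqp'
  omega
end

section
/- Let p ≥ 19 be a prime with p ≡ 3 (mod 8) such that p + x² has at most two distinct prime factors for every odd integer x with x² < p. Then for every odd prime q < √p, −p is a quadratic non-residue modulo q. -/
/-! If `-p` is a square mod `q`, some odd `x < q` has `q ∣ p + x²`. As `p ≡ 3 (mod 8)`,
`p + x² = 4m` with `m` odd, so `ω(p + x²) ≤ 2` forces `p + x² = 4qᵃ`. Now `a ≤ 1` contradicts
`q² < p` and `p ≥ 19`, while `a = 2` gives `p = (2q - x)(2q + x)`. If `a ≥ 3` then `p > 4q²`, so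
`y = 2q - x` is admissible as well and `p + y² = 4qᵇ`; but then `qᵇ - qᵃ = q(q - x)` would be
divisible by `qᵃ`, hence by `q²`. -/

theorem exists_odd_lt_dvd_add_sq {q n : ℕ} (hq : Odd q) (hn : ¬ q ∣ n)
    (hsq : IsSquare (-(n : ZMod q))) : ∃ x, Odd x ∧ x < q ∧ q ∣ n + x ^ 2 := by
  obtain ⟨s, hs⟩ := hsq
  have : NeZero q := ⟨hq.pos.ne'⟩
  have hdvd : ∀ x : ℕ, (x : ZMod q) = s ∨ (x : ZMod q) = -s → q ∣ n + x ^ 2 := by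
    intro x hx
    rw [← ZMod.natCast_eq_zero_iff]
    push_cast
    rcases hx with hx | hx <;> rw [hx] <;> linear_combination -hs
  have hs0 : s.val ≠ 0 := by
    rw [ne_eq, ZMod.val_eq_zero]
    rintro rfl
    exact hn ((ZMod.natCast_eq_zero_iff n q).mp (neg_eq_zero.mp (by simpa using hs)))
  rcases Nat.even_or_odd s.val with heven | hodd
  · refine ⟨q - s.val, Nat.Odd.sub_even (ZMod.val_lt s).le hq heven,
      Nat.sub_lt hq.pos (Nat.pos_of_ne_zero hs0), hdvd _ (Or.inr ?_)⟩
    rw [Nat.cast_sub (ZMod.val_lt s).le, ZMod.natCast_self, ZMod.natCast_zmod_val, zero_sub]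
  · exact ⟨s.val, hodd, ZMod.val_lt s, hdvd _ (Or.inl (ZMod.natCast_zmod_val s))⟩

theorem Nat.eq_or_eq_of_card_primeFactors_le_two {n p q r : ℕ} (hn : n ≠ 0)
    (hcard : n.primeFactors.card ≤ 2) (hp : p.Prime) (hq : q.Prime) (hr : r.Prime)
    (hpq : p ≠ q) (hpn : p ∣ n) (hqn : q ∣ n) (hrn : r ∣ n) : r = p ∨ r = q := by
  by_contra! h
  have hthree : ({p, q, r} : Finset ℕ).card = 3 :=
    Finset.card_eq_three.mpr ⟨p, q, r, hpq, h.1.symm, h.2.symm, rfl⟩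
  have hsub : ({p, q, r} : Finset ℕ) ⊆ n.primeFactors := by
    intro d hd
    simp only [Finset.mem_insert, Finset.mem_singleton] at hd
    rcases hd with rfl | rfl | rfl
    exacts [hp.mem_primeFactors hpn hn, hq.mem_primeFactors hqn hn, hr.mem_primeFactors hrn hn]
  have := Finset.card_le_card hsub
  omega

theorem eq_four_mul_pow_of_card_primeFactors_le_two {N q : ℕ} (hN : N % 8 = 4)
    (hcard : N.primeFactors.card ≤ 2) (hq : q.Prime) (hq2 : q ≠ 2) (hqN : q ∣ N) :
    ∃ a, N = 4 * q ^ a := by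
  obtain ⟨m, rfl⟩ : 4 ∣ N := by omega
  have hm : m % 2 = 1 := by omega
  have hq4 : q.Coprime 4 := ((Nat.coprime_primes hq Nat.prime_two).mpr hq2).pow_right 2
  have hqm : q ∣ m := hq4.dvd_of_dvd_mul_left hqN
  refine ⟨m.primeFactorsList.length,
    congrArg _ (Nat.eq_prime_pow_of_unique_prime_dvd (by omega) ?_)⟩
  intro r hr hrm
  rcases Nat.eq_or_eq_of_card_primeFactors_le_two (by omega) hcard Nat.prime_two hq hr
    hq2.symm ((show 2 ∣ 4 by norm_num).mul_right m) hqN (hrm.mul_left 4) with rfl | rfl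
  · omega
  · rfl

theorem add_sq_mod_eight {p x : ℕ} (hp : p % 8 = 3) (hx : Odd x) : (p + x ^ 2) % 8 = 4 := by
  obtain ⟨k, rfl⟩ := hx
  obtain ⟨j, hj⟩ := Nat.even_mul_succ_self k
  have : (2 * k + 1) ^ 2 = 4 * (k * (k + 1)) + 1 := by ring
  omega

theorem pow_ne_pow_add_mul {q a b r : ℕ} (hq : 1 < q) (ha : 2 ≤ a) (hr : 0 < r) (hrq : r < q) :
    q ^ b ≠ q ^ a + q * r := by
  intro h
  have hlt : q ^ a < q ^ b := h ▸ Nat.lt_add_of_pos_right (Nat.mul_pos (by omega) hr)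
  have hab : a ≤ b := ((Nat.pow_lt_pow_iff_right hq).mp hlt).le
  have hqa : q ^ a ∣ q * r :=
    (Nat.dvd_add_right dvd_rfl).mp (h ▸ pow_dvd_pow q hab)
  have hqq : q * q ∣ q * r := (pow_two q ▸ pow_dvd_pow q ha).trans hqa
  have := Nat.le_of_dvd hr (Nat.dvd_of_mul_dvd_mul_left (by omega) hqq)
  omega

theorem Nat.not_prime_of_add_sq_eq_sq {n x y : ℕ} (hxy : x + 1 < y) (h : n + x ^ 2 = y ^ 2) :
    ¬ n.Prime := by
  have hn : n = (y + x) * (y - x) := by rw [← Nat.sq_sub_sq]; omega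
  rw [hn]
  exact Nat.not_prime_mul (by omega) (by omega)

section

variable {p q : ℕ} (hmod : p % 8 = 3)
  (hω : ∀ x : ℕ, Odd x → x ^ 2 < p → (p + x ^ 2).primeFactors.card ≤ 2)
include hmod hω

theorem exists_add_sq_eq_four_mul_pow (hq : q.Prime) (hq2 : q ≠ 2) {x : ℕ} (hx : Odd x)
    (hxp : x ^ 2 < p) (hqx : q ∣ p + x ^ 2) : ∃ a, p + x ^ 2 = 4 * q ^ a :=
  eq_four_mul_pow_of_card_primeFactors_le_two (add_sq_mod_eight hmod hx) (hω x hx hxp) hq hq2 hqx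

theorem le_two_of_add_sq_eq_four_mul_pow (hq : q.Prime) (hq2 : q ≠ 2) {x a : ℕ} (hx : Odd x)
    (hxq : x < q) (ha : p + x ^ 2 = 4 * q ^ a) : a ≤ 2 := by
  by_contra! ha3
  have hq3 : 3 ≤ q := hq.two_le.lt_of_ne' hq2
  have hx0 : 0 < x := hx.pos
  have hcube : q ^ 3 ≤ q ^ a := Nat.pow_le_pow_right hq.pos ha3
  have hp : 4 * q ^ 2 < p := by nlinarith
  set y := 2 * q - x with hy_def
  have hy : Odd y := Nat.Even.sub_odd (by omega) (even_two_mul q) hx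
  have hyp : y ^ 2 < p :=
    lt_of_le_of_lt (Nat.pow_le_pow_left (by omega) 2) (by nlinarith : (2 * q) ^ 2 < p)
  have hpy : p + y ^ 2 = 4 * q ^ a + 4 * (q * (q - x)) := by
    rw [hy_def]
    zify [(by omega : x ≤ 2 * q), hxq.le] at ha ⊢
    linear_combination ha
  have hqy : q ∣ p + y ^ 2 := by
    rw [hpy]
    exact dvd_add ((dvd_pow_self q (by omega)).mul_left 4) ((dvd_mul_right q _).mul_left 4)
  obtain ⟨b, hb⟩ := exists_add_sq_eq_four_mul_pow hmod hω hq hq2 hy hyp hqy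
  have hdiff : q ^ b = q ^ a + q * (q - x) := by omega
  exact pow_ne_pow_add_mul hq.one_lt (by omega) (by omega) (by omega) hdiff

end

theorem stmt_2 (p : ℕ) (hp : p.Prime) (h19 : 19 ≤ p) (hmod : p % 8 = 3)
    (hω : ∀ x : ℕ, Odd x → x ^ 2 < p → (p + x ^ 2).primeFactors.card ≤ 2) :
    ∀ q : ℕ, q.Prime → Odd q → (q : ℝ) < Real.sqrt p →
      ¬ IsSquare (-(p : ZMod q)) := by
  intro q hq hqo hqlt hsq
  have hq2 : q ≠ 2 := by rintro rfl; exact Nat.not_odd_iff_even.mpr even_two hqo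
  have hq3 : 3 ≤ q := hq.two_le.lt_of_ne' hq2
  have hqp : q ^ 2 < p := by exact_mod_cast (Real.lt_sqrt (Nat.cast_nonneg q)).mp hqlt
  have hqndvd : ¬ q ∣ p := fun h => by
    rcases hp.eq_one_or_self_of_dvd q h with h | rfl
    exacts [hq.one_lt.ne' h, by nlinarith]
  obtain ⟨x, hx, hxq, hqx⟩ := exists_odd_lt_dvd_add_sq hqo hqndvd hsq
  have hxp : x ^ 2 < p := (Nat.pow_lt_pow_left hxq two_ne_zero).trans hqp
  obtain ⟨a, ha⟩ := exists_add_sq_eq_four_mul_pow hmod hω hq hq2 hx hxp hqx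
  have ha2 := le_two_of_add_sq_eq_four_mul_pow hmod hω hq hq2 hx hxq ha
  interval_cases a
  · rw [pow_zero] at ha
    omega
  · rw [pow_one] at ha
    nlinarith
  · exact Nat.not_prime_of_add_sq_eq_sq (x := x) (y := 2 * q) (by omega) (by rw [ha]; ring) hp
end

section
/- Let p be a prime and r an odd prime with 4r² < p and r | p + y² for some odd positive integer y with y < r. Suppose p + y² = 2r^b and p + (2r − y)² = 2r^c for positive integers b, c. Then b = 1 and c > b. -/
/-!
Subtracting the two equations gives `r ^ c = r ^ b + r * (2 * (r - y))`, since
`(2r - y)² - y² = 4r(r - y)`. As `0 < r - y < r` and `r` is odd, `r` does not divide `2(r - y)`,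
so comparing the powers of `r` dividing both sides forces `b = 1`.
-/

theorem Nat.Prime.eq_one_and_lt_of_pow_add_mul_eq_pow {r b c m : ℕ} (hr : r.Prime)
    (hm : ¬ r ∣ m) (h : r ^ b + r * m = r ^ c) : b = 1 ∧ b < c := by
  have hm0 : m ≠ 0 := by rintro rfl; exact hm (dvd_zero r)
  have hbc : b < c := by
    refine (Nat.pow_lt_pow_iff_right hr.one_lt).mp ?_
    rw [← h]
    exact Nat.lt_add_of_pos_right (Nat.mul_pos hr.pos (Nat.pos_of_ne_zero hm0))
  refine ⟨?_, hbc⟩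
  rcases b with _ | _ | b
  · have hrc : r ∣ r ^ c := dvd_pow_self r (by omega)
    rw [← h] at hrc
    exact absurd (by simpa using (Nat.dvd_add_left (dvd_mul_right r m)).mp hrc) hr.not_dvd_one
  · rfl
  · have hsq : r * r ∣ r * m := by
      have hrc : r ^ 2 ∣ r ^ c := pow_dvd_pow r (by omega)
      rw [← h] at hrc
      simpa [sq] using (Nat.dvd_add_right (pow_dvd_pow r (by omega))).mp hrc
    exact absurd (Nat.dvd_of_mul_dvd_mul_left hr.pos hsq) hm

theorem stmt_7_general (p r y b c : ℕ) (hr : r.Prime) (hrodd : Odd r)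
    (hy0 : 0 < y) (hyr : y < r)
    (heq1 : p + y ^ 2 = 2 * r ^ b) (heq2 : p + (2 * r - y) ^ 2 = 2 * r ^ c) :
    b = 1 ∧ b < c := by
  have hsq : (2 * r - y) ^ 2 = y ^ 2 + 4 * r * (r - y) := by
    zify [(by omega : y ≤ 2 * r), hyr.le]; ring
  have h : r ^ b + r * (2 * (r - y)) = r ^ c := by
    have : 2 * r ^ c = 2 * (r ^ b + r * (2 * (r - y))) := by
      rw [← heq2, hsq]; linear_combination heq1
    omega
  have hndvd : ¬ r ∣ 2 * (r - y) := by
    intro hdvd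
    rcases hr.dvd_mul.mp hdvd with h2 | hry
    · rw [(Nat.prime_dvd_prime_iff_eq hr Nat.prime_two).mp h2] at hrodd
      exact absurd hrodd (by decide)
    · exact absurd (Nat.le_of_dvd (by omega) hry) (by omega)
  exact hr.eq_one_and_lt_of_pow_add_mul_eq_pow hndvd h

theorem stmt_7 (p r y b c : ℕ) (hp : p.Prime) (hr : r.Prime) (hrodd : Odd r)
    (hrp : 4 * r ^ 2 < p) (hy : Odd y) (hy0 : 0 < y) (hyr : y < r)
    (hdvd : r ∣ p + y ^ 2) (hb : 0 < b) (hc : 0 < c)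
    (heq1 : p + y ^ 2 = 2 * r ^ b) (heq2 : p + (2 * r - y) ^ 2 = 2 * r ^ c) :
    b = 1 ∧ b < c :=
  stmt_7_general p r y b c hr hrodd hy0 hyr heq1 heq2
end

section
/- Let p ≡ 1 (mod 8) be prime. Then there exists an odd positive integer x with x² < p and a positive integer y such that p + x² = 2y². -/
/-!
Since `p ≡ 1 (mod 8)`, there is `a` with `a² ≡ 2 (mod p)`. Thue's lemma gives integers
`u, v`, not both zero, with `|u|, |v| ≤ ⌊√p⌋` and `u ≡ a v (mod p)`. Then `p ∣ 2v² - u²`, and since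
`u², v² < p` this forces `2v² - u² ∈ {0, p}`; the value `0` is excluded by the irrationality
of `√2`. Parity of `p` makes `u` odd.
-/

theorem Int.eq_zero_of_sq_eq_two_mul_sq {u v : ℤ} (h : u ^ 2 = 2 * v ^ 2) : v = 0 := by
  by_contra hv
  have h2 : IsSquare (2 : ℚ) := ⟨u / v, by field_simp; exact_mod_cast h.symm⟩
  exact Int.prime_two.not_isSquare (by simpa using (Rat.isSquare_iff.mp h2).1)

theorem Nat.Prime.sqrt_sq_lt {p : ℕ} (hp : p.Prime) : p.sqrt ^ 2 < p := by
  refine lt_of_le_of_ne (sq p.sqrt ▸ Nat.sqrt_le' p) fun h => ?_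
  exact hp.prime.not_isSquare ⟨p.sqrt, by rw [← sq, h]⟩

theorem Nat.Prime.sq_lt_of_abs_le_sqrt {p : ℕ} (hp : p.Prime) {u : ℤ} (hu : |u| ≤ p.sqrt) :
    u ^ 2 < p := by
  calc u ^ 2 = |u| ^ 2 := (sq_abs u).symm
    _ ≤ (p.sqrt : ℤ) ^ 2 := pow_le_pow_left₀ (abs_nonneg u) hu 2
    _ < p := by exact_mod_cast hp.sqrt_sq_lt

theorem ZMod.exists_abs_le_sqrt_intCast_eq_mul (n : ℕ) [NeZero n] (a : ZMod n) :
    ∃ u v : ℤ, (u ≠ 0 ∨ v ≠ 0) ∧ |u| ≤ n.sqrt ∧ |v| ≤ n.sqrt ∧ (u : ZMod n) = a * v := by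
  have hcard : Fintype.card (ZMod n) < Fintype.card (Fin (n.sqrt + 1) × Fin (n.sqrt + 1)) := by
    simpa [ZMod.card] using Nat.lt_succ_sqrt n
  obtain ⟨⟨i, j⟩, ⟨i', j'⟩, hne, heq⟩ := Fintype.exists_ne_map_eq_of_card_lt
    (fun q : Fin (n.sqrt + 1) × Fin (n.sqrt + 1) => (q.1 : ZMod n) - a * (q.2 : ZMod n)) hcard
  have := i.isLt; have := i'.isLt; have := j.isLt; have := j'.isLt
  refine ⟨(i : ℤ) - i', (j : ℤ) - j', ?_, ?_, ?_, ?_⟩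
  · by_contra! h
    exact hne (by simp only [Prod.mk.injEq, Fin.ext_iff]; omega)
  · rw [abs_le]; omega
  · rw [abs_le]; omega
  · push_cast
    linear_combination heq

theorem Nat.Prime.exists_two_mul_sq_sub_sq_eq {p : ℕ} (hp : p.Prime)
    (h2 : IsSquare (2 : ZMod p)) : ∃ u v : ℤ, u ^ 2 < p ∧ 2 * v ^ 2 - u ^ 2 = p := by
  have : NeZero p := ⟨hp.ne_zero⟩
  obtain ⟨a, ha⟩ := h2
  obtain ⟨u, v, huv0, hu, hv, huv⟩ := ZMod.exists_abs_le_sqrt_intCast_eq_mul p a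
  have hu2 := hp.sq_lt_of_abs_le_sqrt hu
  have hv2 := hp.sq_lt_of_abs_le_sqrt hv
  obtain ⟨c, hc⟩ : (p : ℤ) ∣ 2 * v ^ 2 - u ^ 2 := by
    rw [← ZMod.intCast_zmod_eq_zero_iff_dvd]
    push_cast
    rw [huv, ha]
    ring
  have hp0 : (0 : ℤ) < p := by exact_mod_cast hp.pos
  have hc0 : 0 ≤ c := by nlinarith [sq_nonneg v]
  have hc1 : c ≤ 1 := by nlinarith [sq_nonneg u]
  interval_cases c
  · obtain rfl : v = 0 := Int.eq_zero_of_sq_eq_two_mul_sq (u := u) (by linarith)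
    obtain rfl : u = 0 := by simpa using hc
    simp at huv0
  · exact ⟨u, v, hu2, by rw [hc, mul_one]⟩

theorem stmt_9 (p : ℕ) (hp : p.Prime) (hmod : p % 8 = 1) :
    ∃ x y : ℕ, Odd x ∧ 0 < x ∧ x ^ 2 < p ∧ 0 < y ∧ p + x ^ 2 = 2 * y ^ 2 := by
  have := Fact.mk hp
  obtain ⟨u, v, hu, huv⟩ :=
    hp.exists_two_mul_sq_sub_sq_eq ((ZMod.exists_sq_eq_two_iff (by omega)).mpr (.inl hmod))
  have hx : u.natAbs ^ 2 < p := by zify; rwa [sq_abs]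
  have hxy : p + u.natAbs ^ 2 = 2 * v.natAbs ^ 2 := by zify; simp only [sq_abs]; linarith
  have hodd : Odd u.natAbs := by
    rw [← Nat.odd_pow_iff two_ne_zero, Nat.odd_iff]
    omega
  refine ⟨u.natAbs, v.natAbs, hodd, hodd.pos, hx, Nat.pos_of_ne_zero fun hy => ?_, hxy⟩
  simp [hy] at hxy
  omega
end

section
/- Let p ≡ 7 (mod 8) be prime. Then there exists an odd positive integer x with x² < p and a positive integer t such that p + x² = 8t². -/
/-!
Since `p ≡ 7 (mod 8)`, `2 ≡ s²` for some `s` modulo `p`. Thue's lemma gives integers `x, y`, not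
both zero, with `x², y² < p` and `x ≡ s y`, so `p ∣ x² - 2y²` while `-2p < x² - 2y² < p`. As `√2` is
irrational, `x² - 2y² = -p`, i.e. `p + x² = 2y²`, and reducing this modulo `8` forces `x` odd and
`y = 2t` even.
-/

/-- Thue's lemma: pigeonhole on the `(⌊√n⌋ + 1)²` residues `a - s b` with `0 ≤ a, b ≤ ⌊√n⌋`. -/
theorem ZMod.exists_sq_le_intCast_eq_mul {n : ℕ} [NeZero n] (s : ZMod n) :
    ∃ x y : ℤ, (x ≠ 0 ∨ y ≠ 0) ∧ x ^ 2 ≤ n ∧ y ^ 2 ≤ n ∧ (x : ZMod n) = s * y := by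
  set m := n.sqrt
  have hcard : Fintype.card (ZMod n) < Fintype.card (Fin (m + 1) × Fin (m + 1)) := by
    simpa [ZMod.card, ← sq] using Nat.lt_succ_sqrt' n
  obtain ⟨⟨a₁, b₁⟩, ⟨a₂, b₂⟩, hne, heq⟩ :=
    Fintype.exists_ne_map_eq_of_card_lt (fun q => (q.1 : ZMod n) - s * (q.2 : ℕ)) hcard
  have hsq : ∀ a b : Fin (m + 1), ((a : ℤ) - b) ^ 2 ≤ n := fun a b => by
    have hm : ((m : ℕ) : ℤ) ^ 2 ≤ n := mod_cast Nat.sqrt_le' n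
    have ha := a.is_le
    have hb := b.is_le
    exact (sq_le_sq' (by omega) (by omega)).trans hm
  refine ⟨(a₁ : ℤ) - a₂, (b₁ : ℤ) - b₂, ?_, hsq a₁ a₂, hsq b₁ b₂, ?_⟩
  · by_contra! h
    simp only [ne_eq, Prod.mk.injEq, Fin.ext_iff] at hne
    omega
  · push_cast
    linear_combination heq

theorem Int.eq_zero_of_sq_eq_two_mul_sq_s10 {x y : ℤ} (h : x ^ 2 = 2 * y ^ 2) : x = 0 ∧ y = 0 := by
  have hy : y = 0 := by
    by_contra hy
    have : IsSquare (2 : ℚ) := ⟨x / y, by field_simp; exact_mod_cast h.symm⟩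
    norm_num at this
  subst hy
  simpa using h

theorem Nat.Prime.exists_add_sq_eq_two_mul_sq {p : ℕ} (hp : p.Prime)
    (h2 : IsSquare (2 : ZMod p)) : ∃ x y : ℕ, x ^ 2 < p ∧ p + x ^ 2 = 2 * y ^ 2 := by
  have : Fact p.Prime := ⟨hp⟩
  obtain ⟨s, hs⟩ := h2
  obtain ⟨x, y, hxy, hx, hy, hxs⟩ := ZMod.exists_sq_le_intCast_eq_mul s
  have hnsq : ∀ z : ℤ, z ^ 2 ≠ p := fun z hz =>
    (Nat.prime_iff_prime_int.mp hp).not_isSquare (hz ▸ IsSquare.sq z)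
  replace hx := lt_of_le_of_ne hx (hnsq x)
  replace hy := lt_of_le_of_ne hy (hnsq y)
  obtain ⟨k, hk⟩ : (p : ℤ) ∣ x ^ 2 - 2 * y ^ 2 := by
    rw [← ZMod.intCast_zmod_eq_zero_iff_dvd]
    push_cast
    rw [hxs, hs]
    ring
  have hp0 : (0 : ℤ) < p := mod_cast hp.pos
  have hk_lt : k < 1 := by nlinarith
  have hk_gt : -2 < k := by nlinarith
  obtain rfl | rfl : k = -1 ∨ k = 0 := by omega
  · refine ⟨x.natAbs, y.natAbs, ?_, ?_⟩ <;> zify <;> simp only [sq_abs] <;> linarith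
  · have := Int.eq_zero_of_sq_eq_two_mul_sq_s10 (by linarith : x ^ 2 = 2 * y ^ 2)
    omega

theorem Nat.odd_and_even_of_add_sq_eq_two_mul_sq {p x y : ℕ} (hp : p % 8 = 7)
    (h : p + x ^ 2 = 2 * y ^ 2) : Odd x ∧ Even y := by
  have h8 := congrArg (Nat.cast : ℕ → ZMod 8) h
  have hp8 : (p : ZMod 8) = 7 := by rw [← ZMod.natCast_mod, hp]; rfl
  push_cast [hp8] at h8
  rw [← ZMod.natCast_eq_one_iff_odd, ← ZMod.natCast_eq_zero_iff_even,
    ← ZMod.cast_natCast (by norm_num : 2 ∣ 8) x, ← ZMod.cast_natCast (by norm_num : 2 ∣ 8) y]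
  generalize (x : ZMod 8) = a at *
  generalize (y : ZMod 8) = b at *
  revert a b
  decide

theorem stmt_10 (p : ℕ) (hp : p.Prime) (hmod : p % 8 = 7) :
    ∃ x t : ℕ, Odd x ∧ 0 < x ∧ x ^ 2 < p ∧ 0 < t ∧ p + x ^ 2 = 8 * t ^ 2 := by
  have : Fact p.Prime := ⟨hp⟩
  obtain ⟨x, y, hxp, hxy⟩ :=
    hp.exists_add_sq_eq_two_mul_sq ((ZMod.exists_sq_eq_two_iff (by omega)).mpr (.inr hmod))
  obtain ⟨hx, t, rfl⟩ := Nat.odd_and_even_of_add_sq_eq_two_mul_sq hmod hxy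
  have ht : t ≠ 0 := by
    rintro rfl
    simp at hxy
    omega
  exact ⟨x, t, hx, hx.pos, hxp, Nat.pos_of_ne_zero ht, by linarith⟩
end

section
/- Let p ≥ 47 be a prime with p ≡ 7 (mod 8) such that p + x² has at most two distinct prime factors for every odd integer x with x² < p. Let q < √p be an odd prime dividing p + x² for some odd positive integer x < q, and write p + x² = 2^a q^k with a ≥ 3. Then k ≤ 2. -/
/-!
Suppose `k ≥ 3`, so that `p + x² ≥ 8q³` and hence `p > 9q²`. Since `q² ∣ p + x²` and `q ∤ 4x`, the
shifted values `p + (2q ∓ x)² = (p + x²) + 4q(q ∓ x)` are even and divisible by `q` exactly once, and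
`(2q ∓ x)² < 9q² < p`; the hypothesis on `ω` therefore forces `p + (2q - x)² = 2^b q` and
`p + (2q + x)² = 2^c q`. Their difference `8qx` gives `2^c = 2^b + 8x` with `x` odd, so `b ≤ 3`, and
then `p < p + (2q - x)² ≤ 8q`, which is absurd.
-/

theorem dvd_add_sq_two_mul_add {R : Type*} [CommRing R] {r m q s : R} (hr : r ∣ m + s ^ 2)
    (hrq : r ∣ 4 * q) : r ∣ m + (2 * q + s) ^ 2 := by
  have h : m + (2 * q + s) ^ 2 = m + s ^ 2 + 4 * q * (q + s) := by ring
  rw [h]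
  exact dvd_add hr (Dvd.dvd.mul_right hrq _)

theorem not_sq_dvd_add_sq_two_mul_add {R : Type*} [CommRing R] [IsDomain R] {m q s : R}
    (hq : q ≠ 0) (h : q ^ 2 ∣ m + s ^ 2) (hs : ¬ q ∣ 4 * s) : ¬ q ^ 2 ∣ m + (2 * q + s) ^ 2 := by
  intro h'
  have hdiff : q * q ∣ q * (4 * (q + s)) := by
    have e : q * (4 * (q + s)) = m + (2 * q + s) ^ 2 - (m + s ^ 2) := by ring
    rw [e, ← sq]
    exact dvd_sub h' h
  have h4 : q ∣ 4 * q + 4 * s := by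
    rw [← mul_add]
    exact (mul_dvd_mul_iff_left hq).mp hdiff
  exact hs ((dvd_add_right (dvd_mul_left q 4)).mp h4)

theorem Nat.factorization_eq_one_of_dvd_of_not_sq_dvd {n q : ℕ} (hq : q.Prime) (hn : n ≠ 0)
    (hqn : q ∣ n) (hqn2 : ¬ q ^ 2 ∣ n) : n.factorization q = 1 := by
  have h1 : 1 ≤ n.factorization q := (hq.pow_dvd_iff_le_factorization hn).mp (by simpa using hqn)
  have h2 : ¬ 2 ≤ n.factorization q := fun h ↦ hqn2 ((hq.pow_dvd_iff_le_factorization hn).mpr h)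
  omega

theorem Nat.eq_pow_mul_of_card_primeFactors_le_two {n r q : ℕ} (hr : r.Prime) (hq : q.Prime)
    (hrq : r ≠ q) (hn : n ≠ 0) (hcard : n.primeFactors.card ≤ 2) (hrn : r ∣ n) (hqn : q ∣ n)
    (hqn2 : ¬ q ^ 2 ∣ n) : n = r ^ n.factorization r * q := by
  have hsub : ({r, q} : Finset ℕ) ⊆ n.primeFactors := by
    intro t ht
    rcases Finset.mem_insert.mp ht with rfl | ht
    · exact Nat.mem_primeFactors.mpr ⟨hr, hrn, hn⟩
    · rw [Finset.mem_singleton.mp ht]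
      exact Nat.mem_primeFactors.mpr ⟨hq, hqn, hn⟩
  have hset : n.primeFactors = {r, q} :=
    (Finset.eq_of_subset_of_card_le hsub (by rwa [Finset.card_pair hrq])).symm
  conv_lhs => rw [← Nat.prod_factorization_pow_eq_self hn]
  rw [Finsupp.prod, Nat.support_factorization, hset, Finset.prod_pair hrq,
    Nat.factorization_eq_one_of_dvd_of_not_sq_dvd hq hn hqn hqn2, pow_one]

theorem Nat.le_of_two_pow_eq_two_pow_add_two_pow_mul_odd {b c j x : ℕ} (hx : Odd x)
    (h : 2 ^ c = 2 ^ b + 2 ^ j * x) : b ≤ j := by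
  by_contra! hjb
  have hbc : b < c := (Nat.pow_lt_pow_iff_right one_lt_two).mp (by rw [h]; simp [hx.pos])
  have hb : 2 ^ (j + 1) ∣ 2 ^ b := Nat.pow_dvd_pow 2 hjb
  have hc : 2 ^ (j + 1) ∣ 2 ^ c := Nat.pow_dvd_pow 2 (by omega)
  rw [h] at hc
  have h2x : 2 ^ j * 2 ∣ 2 ^ j * x := by rw [← pow_succ]; exact (Nat.dvd_add_right hb).mp hc
  exact Nat.not_even_iff_odd.mpr hx
    (even_iff_two_dvd.mpr (Nat.dvd_of_mul_dvd_mul_left (by positivity) h2x))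

theorem Nat.not_dvd_four_mul_of_odd_of_lt {q x : ℕ} (hq : Odd q) (hx : 0 < x) (hxq : x < q) :
    ¬ q ∣ 4 * x := fun h ↦
  have h4 : Nat.Coprime q 4 := Nat.Coprime.pow_right 2 (Nat.coprime_two_right.mpr hq)
  absurd (Nat.le_of_dvd hx (h4.dvd_of_dvd_mul_left h)) (by omega)

theorem exists_add_sq_eq_two_pow_mul {m q y : ℕ} {s : ℤ} (hq : q.Prime) (hq2 : q ≠ 2)
    (hcard : (m + y ^ 2).primeFactors.card ≤ 2) (h2 : (2 : ℤ) ∣ m + s ^ 2)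
    (hqq : (q : ℤ) ^ 2 ∣ m + s ^ 2) (hqs : ¬ (q : ℤ) ∣ 4 * s) (hy : y ≠ 0)
    (hys : (y : ℤ) = 2 * q + s) : ∃ b, m + y ^ 2 = 2 ^ b * q := by
  have hcast : ((m + y ^ 2 : ℕ) : ℤ) = m + (2 * q + s) ^ 2 := by push_cast; rw [hys]
  have hdvd : ∀ r : ℕ, (r : ℤ) ∣ m + s ^ 2 → r ∣ 4 * q → r ∣ m + y ^ 2 := fun r hr hrq ↦ by
    rw [← Int.natCast_dvd_natCast, hcast]
    exact dvd_add_sq_two_mul_add hr (by exact_mod_cast hrq)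
  have hqn2 : ¬ q ^ 2 ∣ m + y ^ 2 := by
    rw [← Int.natCast_dvd_natCast, hcast]
    push_cast
    exact not_sq_dvd_add_sq_two_mul_add (by exact_mod_cast hq.ne_zero) hqq hqs
  have hn : m + y ^ 2 ≠ 0 := by positivity
  exact ⟨_, Nat.eq_pow_mul_of_card_primeFactors_le_two Nat.prime_two hq hq2.symm hn hcard
    (hdvd 2 h2 (dvd_mul_of_dvd_left (by norm_num) q))
    (hdvd q (dvd_trans (dvd_pow_self _ two_ne_zero) hqq) (dvd_mul_left q 4)) hqn2⟩

theorem stmt_11_general (p q x a k : ℕ)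
    (hω : ∀ z : ℕ, Odd z → z ^ 2 < p → (p + z ^ 2).primeFactors.card ≤ 2)
    (hq : q.Prime) (hqodd : Odd q)
    (hx : Odd x) (hxq : x < q)
    (ha : 3 ≤ a) (heq : p + x ^ 2 = 2 ^ a * q ^ k) :
    k ≤ 2 := by
  by_contra! hk
  have hq2 : q ≠ 2 := by rintro rfl; exact Nat.not_even_iff_odd.mpr hqodd even_two
  have hbig : 2 ^ 3 * q ^ 3 ≤ p + x ^ 2 :=
    heq ▸ Nat.mul_le_mul (Nat.pow_le_pow_right two_pos ha) (Nat.pow_le_pow_right hq.pos hk)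
  have h2 : (2 : ℤ) ∣ p + x ^ 2 := by
    exact_mod_cast heq ▸ Dvd.dvd.mul_right (dvd_pow_self 2 (by omega)) _
  have hqq : (q : ℤ) ^ 2 ∣ p + x ^ 2 := by
    exact_mod_cast heq ▸ Dvd.dvd.mul_left (pow_dvd_pow q (by omega)) _
  have hqx : ¬ (q : ℤ) ∣ 4 * x := by
    exact_mod_cast Nat.not_dvd_four_mul_of_odd_of_lt hqodd hx.pos hxq
  have hxq2 : x ≤ 2 * q := by omega
  have hp : 9 * q ^ 2 < p := by nlinarith [hq.two_le]
  obtain ⟨b, hb⟩ := exists_add_sq_eq_two_pow_mul (s := -x) hq hq2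
    (hω _ (Nat.Even.sub_odd hxq2 (even_two_mul q) hx)
      ((Nat.pow_le_pow_left (Nat.sub_le _ _) 2).trans_lt (by nlinarith)))
    (by simpa using h2) (by simpa using hqq) (by simpa using hqx) (by omega)
    (by push_cast [hxq2]; ring)
  obtain ⟨c, hc⟩ := exists_add_sq_eq_two_pow_mul hq hq2
    (hω _ ((even_two_mul q).add_odd hx)
      ((Nat.pow_lt_pow_left (by omega : 2 * q + x < 3 * q) two_ne_zero).trans (by nlinarith)))
    h2 hqq hqx (by omega) (by push_cast; ring)
  have hbc : 2 ^ c = 2 ^ b + 2 ^ 3 * x := by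
    apply Nat.eq_of_mul_eq_mul_right hq.pos
    zify [hxq2] at hb hc ⊢
    linear_combination hb - hc
  have hb8 : 2 ^ b ≤ 2 ^ 3 :=
    Nat.pow_le_pow_right two_pos (Nat.le_of_two_pow_eq_two_pow_add_two_pow_mul_odd hx hbc)
  nlinarith

theorem stmt_11 (p q x a k : ℕ) (hp : p.Prime) (h47 : 47 ≤ p) (hmod : p % 8 = 7)
    (hω : ∀ z : ℕ, Odd z → z ^ 2 < p → (p + z ^ 2).primeFactors.card ≤ 2)
    (hq : q.Prime) (hqodd : Odd q) (hqp : (q : ℝ) < Real.sqrt p)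
    (hx : Odd x) (hx0 : 0 < x) (hxq : x < q) (hdvd : q ∣ p + x ^ 2)
    (ha : 3 ≤ a) (hk : 0 < k) (heq : p + x ^ 2 = 2 ^ a * q ^ k) :
    k ≤ 2 :=
  stmt_11_general p q x a k hω hq hqodd hx hxq ha heq
end

section
/- Let p be a prime with p ≡ 7 (mod 8), q an odd prime, and x an odd positive integer with x < q and 9q² < p. Suppose p + (2q − x)² = 2^b q and p + (2q + x)² = 2^c q with b, c ≥ 3. Then b = 3. -/
theorem Nat.add_sq_eq_tsub_sq_add {a x : ℕ} (h : x ≤ a) :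
    (a + x) ^ 2 = (a - x) ^ 2 + 4 * a * x := by
  zify [h]
  ring

/-- If `k < b`, then `2 ^ (k + 1)` divides `2 ^ b` and `2 ^ c` (as `c > b`) but not `2 ^ k * x`. -/
theorem Nat.eq_of_two_pow_add_two_pow_mul_odd {b c k x : ℕ} (hx : Odd x) (hkb : k ≤ b)
    (h : 2 ^ b + 2 ^ k * x = 2 ^ c) : b = k := by
  by_contra hne
  have hbc : b < c := by
    have : 2 ^ b < 2 ^ c := h ▸ Nat.lt_add_of_pos_right (by have := hx.pos; positivity)
    exact (Nat.pow_lt_pow_iff_right (by norm_num)).1 this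
  have hdvd_b : 2 ^ (k + 1) ∣ 2 ^ b := Nat.pow_dvd_pow 2 (by omega)
  have hdvd_c : 2 ^ (k + 1) ∣ 2 ^ c := Nat.pow_dvd_pow 2 (by omega)
  rw [← h, Nat.dvd_add_right hdvd_b, pow_succ] at hdvd_c
  exact (Nat.not_even_iff_odd.2 hx) (even_iff_two_dvd.2
    (Nat.dvd_of_mul_dvd_mul_left (by positivity) hdvd_c))

theorem stmt_12_general (p q x b c : ℕ)
    (hq : q.Prime) (hx : Odd x) (hxq : x < q)
    (hb : 3 ≤ b)
    (heq1 : p + (2 * q - x) ^ 2 = 2 ^ b * q)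
    (heq2 : p + (2 * q + x) ^ 2 = 2 ^ c * q) :
    b = 3 := by
  have hsq : (2 * q + x) ^ 2 = (2 * q - x) ^ 2 + 8 * x * q := by
    rw [Nat.add_sq_eq_tsub_sq_add (by omega)]
    ring
  have hdiff : (2 ^ b + 2 ^ 3 * x) * q = 2 ^ c * q := by
    rw [← heq2, hsq, ← add_assoc, heq1]
    ring
  exact Nat.eq_of_two_pow_add_two_pow_mul_odd hx hb (Nat.eq_of_mul_eq_mul_right hq.pos hdiff)

theorem stmt_12 (p q x b c : ℕ) (hp : p.Prime) (hmod : p % 8 = 7)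
    (hq : q.Prime) (hqodd : Odd q) (hx : Odd x) (hx0 : 0 < x) (hxq : x < q)
    (hqp : 9 * q ^ 2 < p) (hb : 3 ≤ b) (hc : 3 ≤ c)
    (heq1 : p + (2 * q - x) ^ 2 = 2 ^ b * q)
    (heq2 : p + (2 * q + x) ^ 2 = 2 ^ c * q) :
    b = 3 :=
  stmt_12_general p q x b c hq hx hxq hb heq1 heq2
end

section
/- Let p ≥ 47 be prime with p ≡ 7 (mod 8) such that p + x² has at most two distinct prime factors for all odd x with x² < p. Suppose x is odd, x² < p, q is an odd prime, and p + x² = 2^a q^{2b} with a, b positive integers. Then a = 3 and b = 1, i.e., p + x² = 8q². -/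
/-!
Put `N = p + x ^ 2 = 2 ^ a * q ^ (2 * b)`. If `u = 2 * v` is even with `u ^ 2 < p`, then
`z = |u - x|` is odd with `z ^ 2 < p`, and `p + z ^ 2 = N + u ^ 2 - 2 * u * x`. Writing
`N = 4 * v * m` with `q` dividing `v` and `m`, this is `4 * v * (m + v - x)`: it is divisible by
`2` and `q`, so by hypothesis its cofactor `m + v - x`, which is prime to `q` because `q ∤ x`,
is a power of `2`.

Now `a ≥ 3` because `8 ∣ N`, and `a` is odd because `p` is not `T ^ 2 - x ^ 2` for `p ≥ 47`.
For `a ≥ 5` the choice `v = 2 * q ^ b` makes the cofactor odd, hence `1`, which makes `x` too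
large. For `a = 3` and `b ≥ 2`, with `c = q ^ (b - 1)` the choices `v = c` and `v = 2 * c` give
two powers of two `2 ^ σ > 2 ^ τ` with `2 ^ σ < 4 * 2 ^ τ` and difference `(q ^ 2 - 1) * c`;
so `2 ^ τ = (q ^ 2 - 1) * c` is divisible by `q`, a contradiction.
-/

theorem Nat.eq_pow_of_dvd_of_primeFactors_card_le_two {N r q d : ℕ}
    (hN : N.primeFactors.card ≤ 2) (hN0 : N ≠ 0) (hr : r.Prime) (hq : q.Prime) (hrq : r ≠ q)
    (hrN : r ∣ N) (hqN : q ∣ N) (hd : d ∣ N) (hqd : ¬ q ∣ d) : ∃ σ, d = r ^ σ := by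
  have hrq_eq : N.primeFactors = {r, q} :=
    (Finset.eq_of_subset_of_card_le
      (Finset.insert_subset_iff.2 ⟨Nat.mem_primeFactors.2 ⟨hr, hrN, hN0⟩,
        Finset.singleton_subset_iff.2 (Nat.mem_primeFactors.2 ⟨hq, hqN, hN0⟩)⟩)
      (by rwa [Finset.card_pair hrq])).symm
  refine ⟨_, Nat.eq_prime_pow_of_unique_prime_dvd (ne_zero_of_dvd_ne_zero hN0 hd) fun hs hsd => ?_⟩
  have hs : _ ∈ N.primeFactors := Nat.mem_primeFactors.2 ⟨hs, hsd.trans hd, hN0⟩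
  rw [hrq_eq, Finset.mem_insert, Finset.mem_singleton] at hs
  exact hs.resolve_right (by rintro rfl; exact hqd hsd)

theorem Nat.Prime.eq_two_mul_add_one_of_add_sq_eq_sq {p x T : ℕ} (hp : p.Prime)
    (h : p + x ^ 2 = T ^ 2) : p = 2 * x + 1 := by
  have hxT : x < T := by nlinarith [hp.pos]
  have hfac : (T - x) * (T + x) = p := by
    rw [mul_comm, ← Nat.sq_sub_sq, ← h, Nat.add_sub_cancel]
  rcases hp.eq_one_or_self_of_dvd _ ⟨_, hfac.symm⟩ with h1 | h1
  · obtain rfl : T = x + 1 := by omega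
    linarith
  · rw [h1] at hfac
    nlinarith [hp.pos]

theorem eight_dvd_add_sq_of_mod_eight {p x : ℕ} (hp : p % 8 = 7) (hx : Odd x) :
    8 ∣ p + x ^ 2 := by
  obtain ⟨t, rfl⟩ := hx
  obtain ⟨s, hs⟩ := Nat.even_mul_succ_self t
  have : (2 * t + 1) ^ 2 = 8 * s + 1 := by nlinarith
  omega

theorem Nat.Prime.not_dvd_of_sq_dvd_add_sq {p q x : ℕ} (hp : p.Prime) (hq : q.Prime)
    (hxp : x ^ 2 < p) (hqN : q ^ 2 ∣ p + x ^ 2) : ¬ q ∣ x := by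
  intro hqx
  have hqp : q ∣ p :=
    (Nat.dvd_add_left (hqx.pow two_ne_zero)).1 ((dvd_pow_self q two_ne_zero).trans hqN)
  obtain rfl := (Nat.prime_dvd_prime_iff_eq hq hp).1 hqp
  have := Nat.le_of_dvd (by omega) hqN
  nlinarith [hq.two_le]

theorem three_le_of_eight_dvd_two_pow_mul {a n : ℕ} (hn : Odd n) (h : 8 ∣ 2 ^ a * n) :
    3 ≤ a :=
  (Nat.pow_dvd_pow_iff_le_right one_lt_two).1 <|
    ((Nat.coprime_two_left.2 hn).pow_left 3).dvd_of_dvd_mul_right h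

section Shift

variable {p x : ℕ} (hω : ∀ z : ℕ, Odd z → z ^ 2 < p → (p + z ^ 2).primeFactors.card ≤ 2)
  (hx : Odd x) (hxp : x ^ 2 < p)
include hω hx hxp

theorem exists_add_two_pow_of_shift {q v m : ℕ} (hq : q.Prime) (hq2 : q ≠ 2) (hqx : ¬ q ∣ x)
    (hqv : q ∣ v) (hqm : q ∣ m) (hN : p + x ^ 2 = 4 * v * m) (hvp : (2 * v) ^ 2 < p) :
    ∃ σ, m + v = x + 2 ^ σ := by
  set z := ((2 * v : ℤ) - x).natAbs with hz_def
  have hz : Odd z := Int.natAbs_odd.2 <| by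
    simpa using (even_two_mul (v : ℤ)).sub_odd (hx.natCast (R := ℤ))
  have hzp : z ^ 2 < p := by
    rcases (by omega : z ≤ 2 * v ∨ z ≤ x) with h | h
    · exact lt_of_le_of_lt (Nat.pow_le_pow_left h 2) hvp
    · exact lt_of_le_of_lt (Nat.pow_le_pow_left h 2) hxp
  have hshift : ((p + z ^ 2 : ℕ) : ℤ) = 4 * v * (m + v - x) := by
    have hN' : (p : ℤ) + x ^ 2 = 4 * v * m := by exact_mod_cast hN
    push_cast
    rw [Int.natAbs_sq]
    linear_combination hN'
  obtain ⟨k, hk⟩ : ∃ k, m + v = x + k := by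
    refine Nat.exists_eq_add_of_le ?_
    have := pos_of_mul_pos_right (hshift ▸ Int.natCast_pos.2 (by omega)) (by positivity)
    omega
  have hzk : p + z ^ 2 = 4 * v * k := by
    have : ((p + z ^ 2 : ℕ) : ℤ) = ((4 * v * k : ℕ) : ℤ) := by
      have hk' : (m : ℤ) + v = x + k := by exact_mod_cast hk
      rw [hshift]; push_cast; linear_combination (4 * v : ℤ) * hk'
    exact_mod_cast this
  have hqk : ¬ q ∣ k := fun h =>
    hqx <| (Nat.dvd_add_left h).1 (hk ▸ dvd_add hqm hqv)
  obtain ⟨σ, rfl⟩ := Nat.eq_pow_of_dvd_of_primeFactors_card_le_two (hω z hz hzp) (by omega)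
    Nat.prime_two hq hq2.symm (hzk ▸ ⟨2 * v * k, by ring⟩) (hzk ▸ (hqv.mul_left 4).mul_right k)
    (hzk ▸ dvd_mul_left k _) hqk
  exact ⟨σ, hk⟩

theorem add_sq_ne_two_pow_mul_sq {q a Q : ℕ} (hq : q.Prime) (hq2 : q ≠ 2) (hqx : ¬ q ∣ x)
    (ha : 5 ≤ a) (hqQ : q ∣ Q) : p + x ^ 2 ≠ 2 ^ a * Q ^ 2 := by
  intro hN
  set M := 2 ^ (a - 3)
  have hM : 2 ^ 2 ≤ M := Nat.pow_le_pow_right two_pos (by omega)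
  have hN' : p + x ^ 2 = 8 * M * Q ^ 2 := by
    rw [hN, show a = 3 + (a - 3) by omega, pow_add]; rfl
  have hQ : 0 < Q := Nat.pos_of_ne_zero <| by rintro rfl; simp at hN'; omega
  obtain ⟨σ, hσ⟩ := exists_add_two_pow_of_shift hω hx hxp hq hq2 hqx (v := 2 * Q) (m := M * Q)
    (dvd_mul_of_dvd_right hqQ 2) (dvd_mul_of_dvd_right hqQ M) (by rw [hN']; ring)
    (by nlinarith)
  have hσ0 : σ = 0 := by
    by_contra hσ0
    have hM_even : Even M := Nat.even_pow.2 ⟨even_two, by omega⟩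
    have := congrArg Even hσ
    simp [Nat.even_add, hM_even, Nat.even_pow, hσ0, Nat.not_even_iff_odd.2 hx] at this
  subst hσ0
  nlinarith

theorem add_sq_ne_eight_mul_pow {q b : ℕ} (hq : q.Prime) (hq2 : q ≠ 2) (hqx : ¬ q ∣ x)
    (hb : 2 ≤ b) : p + x ^ 2 ≠ 8 * q ^ (2 * b) := by
  intro hN
  set c := q ^ (b - 1)
  have hqc : q ∣ c := dvd_pow_self q (by omega)
  have hc : 0 < c := pow_pos hq.pos _
  have hq3 : 3 ≤ q := by have := hq.two_le; omega
  have hN' : p + x ^ 2 = 8 * q ^ 2 * c ^ 2 := by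
    rw [hN, show 2 * b = 2 + 2 * (b - 1) by omega, pow_add, pow_mul']; ring
  have hcq : 3 * c ≤ q * c := Nat.mul_le_mul_right c hq3
  obtain ⟨σ, hσ⟩ := exists_add_two_pow_of_shift hω hx hxp hq hq2 hqx (v := c)
    (m := 2 * q ^ 2 * c) hqc (by rw [pow_two]; exact dvd_mul_of_dvd_right hqc _)
    (by rw [hN']; ring) (by nlinarith)
  obtain ⟨τ, hτ⟩ := exists_add_two_pow_of_shift hω hx hxp hq hq2 hqx (v := 2 * c)
    (m := q ^ 2 * c) (dvd_mul_of_dvd_right hqc 2) (dvd_mul_of_dvd_right hqc _)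
    (by rw [hN']; ring) (by nlinarith)
  have hxqc : x < 2 * q * c := by nlinarith
  have hτσ : τ < σ := (Nat.pow_lt_pow_iff_right one_lt_two).1 (by nlinarith)
  have hστ : σ < τ + 2 := (Nat.pow_lt_pow_iff_right one_lt_two).1 (by rw [pow_add]; nlinarith)
  obtain rfl : σ = τ + 1 := by omega
  have hτc : 2 ^ τ + c = q ^ 2 * c := by rw [pow_succ 2 τ] at hσ; linarith
  have hq_dvd : q ∣ 2 ^ τ := (Nat.dvd_add_left hqc).1 <| hτc ▸ dvd_mul_of_dvd_right hqc _
  exact hq2 <| (Nat.prime_dvd_prime_iff_eq hq Nat.prime_two).1 (hq.dvd_of_dvd_pow hq_dvd)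

end Shift

theorem stmt_14_general (p q x a b : ℕ) (hp : p.Prime) (h47 : 47 ≤ p) (hmod : p % 8 = 7)
    (hω : ∀ z : ℕ, Odd z → z ^ 2 < p → (p + z ^ 2).primeFactors.card ≤ 2)
    (hx : Odd x) (hxp : x ^ 2 < p) (hq : q.Prime) (hqodd : Odd q)
    (hb : 0 < b) (heq : p + x ^ 2 = 2 ^ a * q ^ (2 * b)) :
    a = 3 ∧ b = 1 ∧ p + x ^ 2 = 8 * q ^ 2 := by
  have hq2 : q ≠ 2 := by rintro rfl; exact Nat.not_odd_iff_even.2 even_two hqodd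
  have hqx : ¬ q ∣ x := hp.not_dvd_of_sq_dvd_add_sq hq hxp <|
    heq ▸ (pow_dvd_pow q (by omega)).mul_left _
  have ha3 : 3 ≤ a :=
    three_le_of_eight_dvd_two_pow_mul hqodd.pow (heq ▸ eight_dvd_add_sq_of_mod_eight hmod hx)
  have ha_odd : Odd a := by
    rw [← Nat.not_even_iff_odd]
    rintro ⟨m, rfl⟩
    have := hp.eq_two_mul_add_one_of_add_sq_eq_sq (T := 2 ^ m * q ^ b) (by rw [heq]; ring)
    nlinarith
  obtain rfl : a = 3 := by
    by_contra ha
    obtain ⟨k, hk⟩ := ha_odd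
    exact add_sq_ne_two_pow_mul_sq (a := a) hω hx hxp hq hq2 hqx (by omega)
      (dvd_pow_self q hb.ne') (by rw [heq, pow_mul'])
  obtain rfl : b = 1 := by
    by_contra hb1
    exact add_sq_ne_eight_mul_pow hω hx hxp hq hq2 hqx (by omega) heq
  exact ⟨rfl, rfl, by rw [heq]; norm_num⟩

theorem stmt_14 (p q x a b : ℕ) (hp : p.Prime) (h47 : 47 ≤ p) (hmod : p % 8 = 7)
    (hω : ∀ z : ℕ, Odd z → z ^ 2 < p → (p + z ^ 2).primeFactors.card ≤ 2)
    (hx : Odd x) (hxp : x ^ 2 < p) (hq : q.Prime) (hqodd : Odd q)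
    (ha : 0 < a) (hb : 0 < b) (heq : p + x ^ 2 = 2 ^ a * q ^ (2 * b)) :
    a = 3 ∧ b = 1 ∧ p + x ^ 2 = 8 * q ^ 2 :=
  stmt_14_general p q x a b hp h47 hmod hω hx hxp hq hqodd hb heq
end
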